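/- arXiv:1707.04981 — 2 statements merged into one kernel-verified Lean document; each statement's English description precedes it below -/
import Mathlib

section
/- Suppose the discount function satisfies δ(i)δ(j) ≤ δ(i+j) for all i,j ∈ ℕ. Then for any two equilibria S, T ∈ ℰ, the set (S∩T)_∞ := ∩_{n=1}^∞ Θⁿ(S∩T) is an equilibrium and satisfies V(x, (S∩T)_∞) ≥ max(V(x,S), V(x,T)) for all x ∈ 𝕏. -/
/-!
Everything is compared through the hitting values `J(·, ρ(·,V))`, computed as lower integrals.
The key step is a comparison principle: let `A ⊆ S ∩ T` be such that stopping is worse than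
waiting for `T` on `S \ A`, and worse than waiting for `S` on `T \ S`. Consider the relay
strategy that goes to the first visit of `S` and then, until it stands in `A`, waits for the next
visit of `T` from states in `S` and of `S` from the other states. Each relay does not decrease the
expected reward, by the Markov property and decreasing impatience `δ i δ j ≤ δ (i + j)`, and the
relay times converge to `ρ(·,A)`, so `J(·,S) ≤ J(·,A)` by dominated convergence.

For equilibria `S, T` this gives `J(·,S), J(·,T) ≤ J(·,S ∩ T)`, hence `Θ(S ∩ T) ⊆ S ∩ T`; with
`S = T = R` and `A = Θ R` it gives `J(·,R) ≤ J(·,Θ R)` whenever `Θ R ⊆ R`. So the iterates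
`Θⁿ(S ∩ T)` decrease while their values increase, and passing to the limit shows that their
intersection is a fixed point of `Θ` whose value dominates those of `S` and `T`.
-/

open MeasureTheory ProbabilityTheory Set Filter Topology
open scoped ENNReal ENat

noncomputable section

/-- The σ-algebra generated by the first `n+1` coordinates of the path space:
the natural filtration of the coordinate process at time `n`. -/
def pathSigma (𝕏 : Type*) [m : MeasurableSpace 𝕏] (n : ℕ) : MeasurableSpace (ℕ → 𝕏) :=
  ⨆ i ∈ Finset.range (n + 1), MeasurableSpace.comap (fun ω : ℕ → 𝕏 => ω i) m

/-- `Pr` is the family of laws of the time-homogeneous Markov chain with one-step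
transition kernel `Q`: under `Pr x` the chain starts at `x`, and the Markov property
`Pr^x(X_{n+1} ∈ A | 𝓕_n) = Q(X_n, A)` holds. -/
structure IsMarkovChainLaw {𝕏 : Type*} [MeasurableSpace 𝕏]
    (Pr : Kernel 𝕏 (ℕ → 𝕏)) (Q : Kernel 𝕏 𝕏) : Prop where
  start : ∀ x : 𝕏, Pr x {ω | ω 0 = x} = 1
  markov : ∀ (x : 𝕏) (n : ℕ) (B : Set (ℕ → 𝕏)), MeasurableSet[pathSigma 𝕏 n] B →
    ∀ A : Set 𝕏, MeasurableSet A →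
      Pr x (B ∩ {ω | ω (n + 1) ∈ A}) = ∫⁻ ω in B, Q (ω n) A ∂(Pr x)

/-- The first hitting time `ρ(x,S) = inf {t ≥ 1 : X_t ∈ S}` along the path `ω`
(equal to `⊤` if `S` is never reached at a time `≥ 1`). -/
def hitTime {𝕏 : Type*} (S : Set 𝕏) (ω : ℕ → 𝕏) : ℕ∞ :=
  sInf {n : ℕ∞ | ∃ t : ℕ, n = (t : ℕ∞) ∧ 1 ≤ t ∧ ω t ∈ S}

/-- The discounted payoff `δ(ρ(x,S)) f(X_{ρ(x,S)})` collected along the path `ω`,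
with the convention that it vanishes when `S` is never hit. -/
def stopPayoff {𝕏 : Type*} (δ : ℕ → ℝ) (f : 𝕏 → ℝ) (S : Set 𝕏) (ω : ℕ → 𝕏) : ℝ :=
  if hitTime S ω = ⊤ then 0
  else δ (hitTime S ω).toNat * f (ω (hitTime S ω).toNat)

/-- The objective value `J(x, ρ(x,S)) = 𝔼^x[δ(ρ(x,S)) f(X_{ρ(x,S)})]`. -/
def valJ {𝕏 : Type*} [MeasurableSpace 𝕏] (Pr : Kernel 𝕏 (ℕ → 𝕏)) (δ : ℕ → ℝ) (f : 𝕏 → ℝ)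
    (S : Set 𝕏) (x : 𝕏) : ℝ :=
  ∫ ω, stopPayoff δ f S ω ∂(Pr x)

/-- The operator `Θ(S) = {x ∈ 𝕏 : f(x) ≥ J(x, ρ(x,S))}`. -/
def Θ {𝕏 : Type*} [MeasurableSpace 𝕏] (Pr : Kernel 𝕏 (ℕ → 𝕏)) (δ : ℕ → ℝ) (f : 𝕏 → ℝ)
    (S : Set 𝕏) : Set 𝕏 :=
  {x | valJ Pr δ f S x ≤ f x}

/-- A Borel set `S ⊆ 𝕏` is an equilibrium if `Θ(S) = S`. -/
def IsEquilibrium {𝕏 : Type*} [MeasurableSpace 𝕏] (Pr : Kernel 𝕏 (ℕ → 𝕏)) (δ : ℕ → ℝ)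
    (f : 𝕏 → ℝ) (S : Set 𝕏) : Prop :=
  MeasurableSet S ∧ Θ Pr δ f S = S

/-- The value `V(x,S) = max (f x) (J(x, ρ(x,S)))` associated with an equilibrium `S`. -/
def valV {𝕏 : Type*} [MeasurableSpace 𝕏] (Pr : Kernel 𝕏 (ℕ → 𝕏)) (δ : ℕ → ℝ) (f : 𝕏 → ℝ)
    (S : Set 𝕏) (x : 𝕏) : ℝ :=
  max (f x) (valJ Pr δ f S x)

section HittingTime

variable {𝕏 : Type*} {S S' : Set 𝕏} {ω : ℕ → 𝕏}

lemma hitTime_le {t : ℕ} (ht : 1 ≤ t) (hω : ω t ∈ S) : hitTime S ω ≤ t :=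
  sInf_le ⟨t, rfl, ht, hω⟩

lemma hitTime_eq_natCast_iff {t : ℕ} :
    hitTime S ω = t ↔ 1 ≤ t ∧ ω t ∈ S ∧ ∀ s, 1 ≤ s → s < t → ω s ∉ S := by
  constructor
  · intro h
    have hne : {n : ℕ∞ | ∃ t : ℕ, n = t ∧ 1 ≤ t ∧ ω t ∈ S}.Nonempty := by
      by_contra hempty
      rw [not_nonempty_iff_eq_empty] at hempty
      simp [hitTime, hempty] at h
    obtain ⟨t', ht', ht'1, hωt'⟩ := csInf_mem hne
    rw [← hitTime, h, Nat.cast_inj] at ht'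
    subst ht'
    refine ⟨ht'1, hωt', fun s hs hst hωs => ?_⟩
    have := h ▸ hitTime_le hs hωs
    exact absurd (Nat.cast_le.1 this) (not_le.2 hst)
  · rintro ⟨ht, hωt, hmin⟩
    refine le_antisymm (hitTime_le ht hωt) (le_sInf ?_)
    rintro _ ⟨s, rfl, hs, hωs⟩
    exact Nat.cast_le.2 (not_lt.1 fun hst => hmin s hs hst hωs)

lemma mem_of_hitTime_eq {t : ℕ} (h : hitTime S ω = t) : ω t ∈ S :=
  (hitTime_eq_natCast_iff.1 h).2.1

lemma one_le_hitTime : 1 ≤ hitTime S ω :=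
  le_sInf fun _ ⟨_, h, ht, _⟩ => h ▸ Nat.one_le_cast.2 ht

lemma hitTime_le_hitTime (h : S ⊆ S') : hitTime S' ω ≤ hitTime S ω :=
  le_sInf fun _ ⟨_, ht, ht1, hωt⟩ => ht ▸ hitTime_le ht1 (h hωt)

lemma tendsto_hitTime_iInter {R : ℕ → Set 𝕏} (hR : Antitone R) :
    Tendsto (fun n => hitTime (R n) ω) atTop (𝓝 (hitTime (⋂ n, R n) ω)) := by
  have hmono : Monotone fun n => hitTime (R n) ω := fun n m h => hitTime_le_hitTime (hR h)
  convert tendsto_atTop_iSup hmono using 2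
  refine le_antisymm ?_ (iSup_le fun n => hitTime_le_hitTime (iInter_subset R n))
  rcases eq_or_lt_of_le (le_top : ⨆ n, hitTime (R n) ω ≤ ⊤) with htop | hlt
  · exact htop ▸ le_top
  obtain ⟨N, hN⟩ := ENat.exists_eq_iSup_of_lt_top hlt
  obtain ⟨t, ht⟩ := ENat.ne_top_iff_exists.1 (hN ▸ hlt.ne)
  rw [← hN, ← ht]
  have hstable : ∀ n, N ≤ n → hitTime (R n) ω = t := fun n hn => by
    refine le_antisymm ?_ (ht ▸ hmono hn)
    rw [ht, hN]
    exact le_iSup (fun n => hitTime (R n) ω) n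
  refine hitTime_le (Nat.one_le_cast.1 (ht ▸ one_le_hitTime)) (mem_iInter.2 fun n => ?_)
  exact hR (le_max_left n N) (mem_of_hitTime_eq (hstable _ (le_max_right n N)))

end HittingTime

section PathSpace

variable {𝕏 : Type*}

def pathShift (n : ℕ) (ω : ℕ → 𝕏) : ℕ → 𝕏 := fun t => ω (n + t)

@[simp] lemma pathShift_apply (n : ℕ) (ω : ℕ → 𝕏) (t : ℕ) : pathShift n ω t = ω (n + t) := rfl

lemma pathShift_zero : pathShift (𝕏 := 𝕏) 0 = id := by
  ext; simp

lemma pathShift_pathShift (m n : ℕ) (ω : ℕ → 𝕏) :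
    pathShift m (pathShift n ω) = pathShift (n + m) ω := by
  ext; simp [add_assoc]

variable [m𝕏 : MeasurableSpace 𝕏]

lemma measurable_pathShift (n : ℕ) : Measurable (pathShift (𝕏 := 𝕏) n) :=
  measurable_pi_lambda _ fun t => measurable_pi_apply (n + t)

lemma pathSigma_le_pi (n : ℕ) : pathSigma 𝕏 n ≤ MeasurableSpace.pi :=
  iSup₂_le fun i _ => (measurable_pi_apply i).comap_le

lemma measurable_pathSigma_apply {i n : ℕ} (h : i ≤ n) :
    Measurable[pathSigma 𝕏 n] fun ω : ℕ → 𝕏 => ω i :=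
  measurable_iff_comap_le.2 <| le_iSup₂ (f := fun i (_ : i ∈ Finset.range (n + 1)) =>
    MeasurableSpace.comap (fun ω : ℕ → 𝕏 => ω i) m𝕏) i (Finset.mem_range.2 (by omega))

lemma pathSigma_mono {n m : ℕ} (h : n ≤ m) : pathSigma 𝕏 n ≤ pathSigma 𝕏 m :=
  iSup₂_le fun _ hi =>
    (measurable_pathSigma_apply (by have := Finset.mem_range.1 hi; omega)).comap_le

lemma measurableSet_pathSigma_apply_mem {i n : ℕ} (h : i ≤ n) {A : Set 𝕏} (hA : MeasurableSet A) :
    MeasurableSet[pathSigma 𝕏 n] {ω : ℕ → 𝕏 | ω i ∈ A} :=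
  measurable_pathSigma_apply h hA

lemma measurable_pathShift_pathSigma (m j : ℕ) :
    Measurable[pathSigma 𝕏 (m + j), pathSigma 𝕏 j] (pathShift m) := by
  refine measurable_iff_comap_le.2 ?_
  simp only [pathSigma, MeasurableSpace.comap_iSup, MeasurableSpace.comap_comp]
  refine iSup₂_le fun i hi => (measurable_pathSigma_apply ?_).comap_le
  have := Finset.mem_range.1 hi
  omega

def IsPathStoppingTime (τ : (ℕ → 𝕏) → ℕ∞) : Prop :=
  ∀ n : ℕ, MeasurableSet[pathSigma 𝕏 n] {ω | τ ω = n}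

lemma IsPathStoppingTime.measurableSet_eq {τ : (ℕ → 𝕏) → ℕ∞} (hτ : IsPathStoppingTime τ)
    (n : ℕ) : MeasurableSet {ω | τ ω = n} :=
  pathSigma_le_pi n _ (hτ n)

lemma IsPathStoppingTime.measurable {τ : (ℕ → 𝕏) → ℕ∞} (hτ : IsPathStoppingTime τ) :
    Measurable τ := by
  refine measurable_to_countable' fun t => ?_
  induction t using ENat.recTopCoe with
  | top =>
    have : τ ⁻¹' {⊤} = (⋃ n : ℕ, {ω | τ ω = n})ᶜ := by
      ext ω; cases h : τ ω <;> simp [h]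
    exact this ▸ (MeasurableSet.iUnion hτ.measurableSet_eq).compl
  | coe n => exact hτ.measurableSet_eq n

lemma isPathStoppingTime_hitTime {S : Set 𝕏} (hS : MeasurableSet S) :
    IsPathStoppingTime (hitTime S) := by
  intro n
  simp only [hitTime_eq_natCast_iff, ofPred_and]
  refine .inter (.const _) (.inter (measurableSet_pathSigma_apply_mem le_rfl hS) ?_)
  simp only [ofPred_forall]
  exact .iInter fun s => .iInter fun _ => .iInter fun hsn =>
    (measurableSet_pathSigma_apply_mem hsn.le hS).compl

lemma measurableSet_hitTime_pathShift_eq {S : Set 𝕏} (hS : MeasurableSet S) (m j : ℕ) :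
    MeasurableSet[pathSigma 𝕏 (m + j)] {ω | hitTime S (pathShift m ω) = j} :=
  measurable_pathShift_pathSigma m j (isPathStoppingTime_hitTime hS j)

end PathSpace

lemma lintegral_comp_eq_lintegral_bind {α β : Type*} [MeasurableSpace α] [MeasurableSpace β]
    {μ : Measure α} {φ : α → β} {κ : α → Measure β} (hφ : Measurable φ) (hκ : Measurable κ)
    (h : μ.map φ = μ.bind κ) {g : β → ℝ≥0∞} (hg : Measurable g) :
    ∫⁻ a, g (φ a) ∂μ = ∫⁻ a, ∫⁻ b, g b ∂κ a ∂μ := by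
  rw [← lintegral_map hg hφ, h, Measure.lintegral_bind hκ.aemeasurable hg.aemeasurable]

lemma tsum_setLIntegral_eq_setLIntegral_ne_top {α : Type*} [MeasurableSpace α] {μ : Measure α}
    {τ : α → ℕ∞} (hτ : ∀ n : ℕ, MeasurableSet {a | τ a = n}) (g : α → ℝ≥0∞) :
    ∑' n : ℕ, ∫⁻ a in {a | τ a = n}, g a ∂μ = ∫⁻ a in {a | τ a ≠ ⊤}, g a ∂μ := by
  rw [← lintegral_iUnion hτ]
  · congr
    ext a
    simp [ENat.ne_top_iff_exists, eq_comm]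
  · exact fun i j hij => disjoint_left.2 fun a hi hj => hij (Nat.cast_inj.1 (hi.symm.trans hj))

section MarkovProperty

variable {𝕏 : Type*}

lemma pi_range_succ (A : ℕ → Set 𝕏) (N : ℕ) :
    (Finset.range (N + 1) : Set ℕ).pi A =
      {ω | ω 0 ∈ A 0} ∩ pathShift 1 ⁻¹' (Finset.range N : Set ℕ).pi fun i => A (i + 1) := by
  ext ω
  simp only [Set.mem_pi, Finset.coe_range, mem_Iio, Nat.forall_lt_succ_left, mem_inter_iff,
    mem_ofPred_eq, mem_preimage, pathShift_apply, add_comm 1]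

lemma pi_eq_pi_range_piecewise (s : Finset ℕ) (t : ℕ → Set 𝕏) :
    (s : Set ℕ).pi t =
      (Finset.range (s.sup id).succ : Set ℕ).pi (s.piecewise t fun _ => univ) := by
  ext ω
  simp only [Set.mem_pi, Finset.mem_coe]
  refine ⟨fun h i _ => ?_, fun h i hi => ?_⟩
  · by_cases hi : i ∈ s
    · simpa [Finset.piecewise_eq_of_mem _ _ _ hi] using h i hi
    · simp [Finset.piecewise_eq_of_notMem _ _ _ hi]
  · simpa [Finset.piecewise_eq_of_mem _ _ _ hi] using
      h i (Finset.subset_range_sup_succ s hi)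

variable [MeasurableSpace 𝕏]

lemma setLIntegral_inter_eval_mem {μ : Measure (ℕ → 𝕏)} {B : Set (ℕ → 𝕏)} {A : Set 𝕏}
    (hA : MeasurableSet A) (n : ℕ) (Φ : 𝕏 → ℝ≥0∞) :
    ∫⁻ ω in B ∩ {ω | ω n ∈ A}, Φ (ω n) ∂μ = ∫⁻ ω in B, A.indicator Φ (ω n) ∂μ := by
  have hA' : MeasurableSet {ω : ℕ → 𝕏 | ω n ∈ A} := measurable_pi_apply n hA
  rw [inter_comm, ← Measure.restrict_restrict hA', ← lintegral_indicator hA']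
  rfl

variable {Pr : Kernel 𝕏 (ℕ → 𝕏)} {Q : Kernel 𝕏 𝕏}

namespace IsMarkovChainLaw

lemma map_eval_zero [IsMarkovKernel Pr] (hc : IsMarkovChainLaw Pr Q) (y : 𝕏) :
    (Pr y).map (fun ω => ω 0) = Measure.dirac y := by
  have hfull : ∀ A, MeasurableSet A → y ∈ A → Pr y ((fun ω => ω 0) ⁻¹' A) = 1 :=
    fun A _ hy => le_antisymm prob_le_one
      ((hc.start y).symm.le.trans (measure_mono fun ω (hω : ω 0 = y) => by simp [hω, hy]))
  ext A hA
  rw [Measure.map_apply (measurable_pi_apply 0) hA, Measure.dirac_apply' _ hA]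
  by_cases hy : y ∈ A
  · simp [hy, hfull A hA hy]
  · rw [indicator_of_notMem hy, ← compl_compl A, preimage_compl,
      prob_compl_eq_zero_iff (measurable_pi_apply 0 hA.compl)]
    exact hfull _ hA.compl hy

lemma map_restrict_eval_succ (hc : IsMarkovChainLaw Pr Q) (x : 𝕏) {n : ℕ} {B : Set (ℕ → 𝕏)}
    (hB : MeasurableSet[pathSigma 𝕏 n] B) :
    ((Pr x).restrict B).map (fun ω => ω (n + 1)) = ((Pr x).restrict B).bind fun ω => Q (ω n) := by
  ext A hA
  rw [Measure.map_apply (measurable_pi_apply _) hA,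
    Measure.restrict_apply (measurable_pi_apply _ hA), inter_comm,
    Measure.bind_apply (f := fun ω : ℕ → 𝕏 => Q (ω n)) hA
      (Q.measurable.comp (measurable_pi_apply n)).aemeasurable]
  exact hc.markov x n B hB A hA

lemma setLIntegral_comp_eval_succ (hc : IsMarkovChainLaw Pr Q) (x : 𝕏) {n : ℕ}
    {B : Set (ℕ → 𝕏)} (hB : MeasurableSet[pathSigma 𝕏 n] B) {g : 𝕏 → ℝ≥0∞} (hg : Measurable g) :
    ∫⁻ ω in B, g (ω (n + 1)) ∂Pr x = ∫⁻ ω in B, ∫⁻ y, g y ∂Q (ω n) ∂Pr x :=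
  lintegral_comp_eq_lintegral_bind (measurable_pi_apply _)
    (Q.measurable.comp (measurable_pi_apply n)) (hc.map_restrict_eval_succ x hB) hg

lemma measure_inter_pathShift_preimage_pi [IsMarkovKernel Pr] (hc : IsMarkovChainLaw Pr Q)
    (N : ℕ) : ∀ A : ℕ → Set 𝕏, (∀ i, MeasurableSet (A i)) →
      ∀ (n : ℕ) (x : 𝕏) (B : Set (ℕ → 𝕏)), MeasurableSet[pathSigma 𝕏 n] B →
        Pr x (B ∩ pathShift n ⁻¹' (Finset.range N : Set ℕ).pi A) =
          ∫⁻ ω in B, Pr (ω n) ((Finset.range N : Set ℕ).pi A) ∂Pr x := by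
  induction N with
  | zero => intro A _ n x B _; simp
  | succ N ih =>
    intro A hA
    set Φ : 𝕏 → ℝ≥0∞ := fun y => ∫⁻ z, Pr z ((Finset.range N : Set ℕ).pi fun i => A (i + 1)) ∂Q y
    have hΦ : ∀ n x B, MeasurableSet[pathSigma 𝕏 n] B →
        Pr x (B ∩ pathShift n ⁻¹' (Finset.range (N + 1) : Set ℕ).pi A) =
          ∫⁻ ω in B, (A 0).indicator Φ (ω n) ∂Pr x := by
      intro n x B hB
      have hB' : MeasurableSet[pathSigma 𝕏 n] (B ∩ {ω | ω n ∈ A 0}) :=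
        hB.inter (measurableSet_pathSigma_apply_mem le_rfl (hA 0))
      have hpre : pathShift n ⁻¹' (Finset.range (N + 1) : Set ℕ).pi A = {ω | ω n ∈ A 0} ∩
          pathShift (n + 1) ⁻¹' (Finset.range N : Set ℕ).pi fun i => A (i + 1) := by
        rw [pi_range_succ, preimage_inter]
        congr 1
        ext ω
        simp only [mem_preimage, pathShift_pathShift]
      rw [hpre, ← inter_assoc,
        ih _ (fun i => hA (i + 1)) (n + 1) x _ (pathSigma_mono n.le_succ _ hB'),
        hc.setLIntegral_comp_eval_succ x hB' (Kernel.measurable_coe Pr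
          (.pi (Finset.countable_toSet _) fun i _ => hA (i + 1)))]
      exact setLIntegral_inter_eval_mem (hA 0) n Φ
    intro n x B hB
    rw [hΦ n x B hB]
    -- `hΦ` at time `0` computes `Pr y` of the box itself, since `ω 0` has law `dirac y`.
    refine setLIntegral_congr_fun (pathSigma_le_pi n B hB) fun ω _ => ?_
    have hΦm : Measurable ((A 0).indicator Φ) :=
      (Measurable.lintegral_kernel (Kernel.measurable_coe Pr
        (.pi (Finset.countable_toSet _) fun i _ => hA (i + 1)))).indicator (hA 0)
    have := hΦ 0 (ω n) univ .univ
    rw [univ_inter, pathShift_zero, preimage_id, Measure.restrict_univ,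
      ← lintegral_map hΦm (measurable_pi_apply 0), hc.map_eval_zero, lintegral_dirac' _ hΦm] at this
    exact this.symm

/-- The Markov property at time `n`: conditionally on `𝓕ₙ`, the shifted path has law `Pr (ω n)`. -/
lemma map_restrict_pathShift [IsMarkovKernel Pr] (hc : IsMarkovChainLaw Pr Q) (x : 𝕏)
    {n : ℕ} {B : Set (ℕ → 𝕏)} (hB : MeasurableSet[pathSigma 𝕏 n] B) :
    ((Pr x).restrict B).map (pathShift n) = ((Pr x).restrict B).bind fun ω => Pr (ω n) := by
  have hκ : AEMeasurable (fun ω : ℕ → 𝕏 => Pr (ω n)) ((Pr x).restrict B) :=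
    (Pr.measurable.comp (measurable_pi_apply n)).aemeasurable
  refine ext_of_generate_finite _ generateFrom_squareCylinders.symm
    (isPiSystem_squareCylinders (fun _ => MeasurableSpace.isPiSystem_measurableSet)
      fun _ => .univ) ?_ ?_
  · rintro _ ⟨s, t, ht, rfl⟩
    have ht : ∀ i, MeasurableSet (t i) := fun i => ht i (mem_univ i)
    have hpw : ∀ i, MeasurableSet (s.piecewise t (fun _ => univ) i) := fun i => by
      by_cases hi : i ∈ s
      · simpa [Finset.piecewise_eq_of_mem _ _ _ hi] using ht i
      · simp [Finset.piecewise_eq_of_notMem _ _ _ hi]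
    have hC : MeasurableSet ((s : Set ℕ).pi t) := .pi s.countable_toSet fun i _ => ht i
    rw [Measure.map_apply (measurable_pathShift n) hC,
      Measure.restrict_apply (measurable_pathShift n hC),
      Measure.bind_apply hC hκ, inter_comm, pi_eq_pi_range_piecewise]
    exact hc.measure_inter_pathShift_preimage_pi _ _ hpw n x B hB
  · rw [Measure.map_apply (measurable_pathShift n) .univ, Measure.bind_apply .univ hκ]
    simp

lemma setLIntegral_comp_pathShift [IsMarkovKernel Pr] (hc : IsMarkovChainLaw Pr Q) (x : 𝕏)
    {n : ℕ} {B : Set (ℕ → 𝕏)} (hB : MeasurableSet[pathSigma 𝕏 n] B)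
    {g : (ℕ → 𝕏) → ℝ≥0∞} (hg : Measurable g) :
    ∫⁻ ω in B, g (pathShift n ω) ∂Pr x = ∫⁻ ω in B, ∫⁻ ω', g ω' ∂Pr (ω n) ∂Pr x :=
  lintegral_comp_eq_lintegral_bind (measurable_pathShift n)
    (Pr.measurable.comp (measurable_pi_apply n)) (hc.map_restrict_pathShift x hB) hg

end IsMarkovChainLaw

end MarkovProperty

section Reward

variable {𝕏 : Type*} {δ : ℕ → ℝ} {f : 𝕏 → ℝ}

/-- The `ℝ≥0∞`-valued `stopPayoff`, as a function of the stopping time. -/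
def reward (δ : ℕ → ℝ) (f : 𝕏 → ℝ) (ω : ℕ → 𝕏) : ℕ∞ → ℝ≥0∞
  | ⊤ => 0
  | (t : ℕ) => ENNReal.ofReal (δ t * f (ω t))

@[simp] lemma reward_top (ω : ℕ → 𝕏) : reward δ f ω ⊤ = 0 := rfl

@[simp] lemma reward_natCast (ω : ℕ → 𝕏) (t : ℕ) :
    reward δ f ω t = ENNReal.ofReal (δ t * f (ω t)) := rfl

lemma reward_ne_top (ω : ℕ → 𝕏) (t : ℕ∞) : reward δ f ω t ≠ ⊤ := by
  induction t using ENat.recTopCoe <;> simp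

lemma reward_le {C : ℝ} (hδ : ∀ k, δ k ∈ Icc (0 : ℝ) 1) (hf0 : ∀ x, 0 ≤ f x)
    (hfC : ∀ x, f x ≤ C) (ω : ℕ → 𝕏) (t : ℕ∞) : reward δ f ω t ≤ ENNReal.ofReal C := by
  induction t using ENat.recTopCoe with
  | top => simp
  | coe t =>
    exact ENNReal.ofReal_le_ofReal
      ((mul_le_of_le_one_left (hf0 _) (hδ t).2).trans (hfC _))

lemma continuous_reward {C : ℝ} (hδ : ∀ k, δ k ∈ Icc (0 : ℝ) 1)
    (hδ_lim : Tendsto δ atTop (𝓝 0)) (hfC : ∀ x, f x ≤ C) (ω : ℕ → 𝕏) :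
    Continuous (reward δ f ω) := by
  refine continuous_iff_continuousAt.2 fun t => ?_
  induction t using ENat.recTopCoe with
  | coe t =>
    simp only [ContinuousAt, ENat.nhds_natCast]
    exact tendsto_pure_nhds _ _
  | top =>
    have hbound : Tendsto (fun k => ENNReal.ofReal (δ k * C)) atTop (𝓝 0) := by
      simpa using ENNReal.tendsto_ofReal (hδ_lim.mul_const C)
    refine ENNReal.tendsto_nhds_zero.2 fun ε hε => ?_
    obtain ⟨M, hM⟩ := eventually_atTop.1 (hbound.eventually (eventually_le_nhds hε))
    filter_upwards [Ioi_mem_nhds (ENat.natCast_lt_top M)] with t ht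
    induction t using ENat.recTopCoe with
    | top => simp
    | coe t =>
      exact (ENNReal.ofReal_le_ofReal (mul_le_mul_of_nonneg_left (hfC _) (hδ t).1)).trans
        (hM t (Nat.cast_lt.1 (mem_Ioi.1 ht)).le)

/-- Where decreasing impatience `δ i δ j ≤ δ (i + j)` enters. -/
lemma ofReal_mul_reward_pathShift_le (hδ : ∀ k, δ k ∈ Icc (0 : ℝ) 1) (hf0 : ∀ x, 0 ≤ f x)
    (hDI : ∀ i j : ℕ, δ i * δ j ≤ δ (i + j)) (n : ℕ) (ω : ℕ → 𝕏) (t : ℕ∞) :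
    ENNReal.ofReal (δ n) * reward δ f (pathShift n ω) t ≤ reward δ f ω (n + t) := by
  induction t using ENat.recTopCoe with
  | top => simp
  | coe j =>
    rw [← Nat.cast_add, reward_natCast, reward_natCast, ← ENNReal.ofReal_mul (hδ n).1, ← mul_assoc]
    exact ENNReal.ofReal_le_ofReal (mul_le_mul_of_nonneg_right (hDI n j) (hf0 _))

variable [MeasurableSpace 𝕏]

lemma measurable_reward_comp (hf : Measurable f) {τ : (ℕ → 𝕏) → ℕ∞} (hτ : Measurable τ) :
    Measurable fun ω => reward δ f ω (τ ω) := by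
  refine (measurable_from_prod_countable_left (f := fun p : (ℕ → 𝕏) × ℕ∞ => reward δ f p.1 p.2)
    fun t => ?_).comp (measurable_id.prodMk hτ)
  induction t using ENat.recTopCoe with
  | top => exact measurable_const
  | coe t => exact (measurable_const.mul (hf.comp (measurable_pi_apply t))).ennreal_ofReal

lemma tendsto_lintegral_reward {μ : Measure (ℕ → 𝕏)} [IsFiniteMeasure μ] {C : ℝ}
    (hδ : ∀ k, δ k ∈ Icc (0 : ℝ) 1) (hδ_lim : Tendsto δ atTop (𝓝 0)) (hf : Measurable f)
    (hf0 : ∀ x, 0 ≤ f x) (hfC : ∀ x, f x ≤ C) {τ : ℕ → (ℕ → 𝕏) → ℕ∞} {σ : (ℕ → 𝕏) → ℕ∞}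
    (hτ : ∀ k, Measurable (τ k)) (hlim : ∀ ω, Tendsto (fun k => τ k ω) atTop (𝓝 (σ ω))) :
    Tendsto (fun k => ∫⁻ ω, reward δ f ω (τ k ω) ∂μ) atTop (𝓝 (∫⁻ ω, reward δ f ω (σ ω) ∂μ)) :=
  tendsto_lintegral_of_dominated_convergence (fun _ => ENNReal.ofReal C)
    (fun k => measurable_reward_comp hf (hτ k))
    (fun k => ae_of_all _ fun ω => reward_le hδ hf0 hfC ω _)
    (by simp [ENNReal.mul_eq_top])
    (ae_of_all _ fun ω => ((continuous_reward hδ hδ_lim hfC ω).tendsto _).comp (hlim ω))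

/-- `J(x, ρ(x,V))` as a lower integral, see `valJ_eq_toReal_hitValue`. -/
def hitValue (Pr : Kernel 𝕏 (ℕ → 𝕏)) (δ : ℕ → ℝ) (f : 𝕏 → ℝ) (V : Set 𝕏) (x : 𝕏) : ℝ≥0∞ :=
  ∫⁻ ω, reward δ f ω (hitTime V ω) ∂Pr x

variable {Pr : Kernel 𝕏 (ℕ → 𝕏)} {V : Set 𝕏}

lemma measurable_hitValue (hf : Measurable f) (hV : MeasurableSet V) :
    Measurable (hitValue Pr δ f V) :=
  (measurable_reward_comp hf (isPathStoppingTime_hitTime hV).measurable).lintegral_kernel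

lemma hitValue_ne_top [IsFiniteKernel Pr] {C : ℝ} (hδ : ∀ k, δ k ∈ Icc (0 : ℝ) 1)
    (hf0 : ∀ x, 0 ≤ f x) (hfC : ∀ x, f x ≤ C) (x : 𝕏) : hitValue Pr δ f V x ≠ ⊤ :=
  ne_top_of_le_ne_top (by simp [ENNReal.mul_eq_top])
    (lintegral_mono fun ω => reward_le hδ hf0 hfC ω (hitTime V ω))

lemma tendsto_hitValue_iInter [IsFiniteKernel Pr] {C : ℝ} (hδ : ∀ k, δ k ∈ Icc (0 : ℝ) 1)
    (hδ_lim : Tendsto δ atTop (𝓝 0)) (hf : Measurable f) (hf0 : ∀ x, 0 ≤ f x)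
    (hfC : ∀ x, f x ≤ C) {R : ℕ → Set 𝕏} (hR : ∀ n, MeasurableSet (R n)) (hR_anti : Antitone R)
    (x : 𝕏) :
    Tendsto (fun n => hitValue Pr δ f (R n) x) atTop (𝓝 (hitValue Pr δ f (⋂ n, R n) x)) :=
  tendsto_lintegral_reward hδ hδ_lim hf hf0 hfC
    (fun n => (isPathStoppingTime_hitTime (hR n)).measurable) fun _ =>
      tendsto_hitTime_iInter hR_anti

variable {Q : Kernel 𝕏 𝕏}

/-- The Markov property at `n` turns `hitValue V (ω n)` into the reward of waiting for `V` after
time `n`, up to the discount `δ n`, which decreasing impatience absorbs. -/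
lemma setLIntegral_reward_le_wait [IsMarkovKernel Pr] (hc : IsMarkovChainLaw Pr Q)
    (hδ : ∀ k, δ k ∈ Icc (0 : ℝ) 1) (hDI : ∀ i j : ℕ, δ i * δ j ≤ δ (i + j))
    (hf : Measurable f) (hf0 : ∀ x, 0 ≤ f x) (hV : MeasurableSet V) {n : ℕ}
    {B : Set (ℕ → 𝕏)} (hB : MeasurableSet[pathSigma 𝕏 n] B)
    (hwait : ∀ ω ∈ B, ENNReal.ofReal (f (ω n)) ≤ hitValue Pr δ f V (ω n)) (x : 𝕏) :
    ∫⁻ ω in B, ENNReal.ofReal (δ n * f (ω n)) ∂Pr x ≤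
      ∫⁻ ω in B, reward δ f ω (n + hitTime V (pathShift n ω)) ∂Pr x := by
  have hg := measurable_reward_comp (δ := δ) hf (isPathStoppingTime_hitTime hV).measurable
  calc ∫⁻ ω in B, ENNReal.ofReal (δ n * f (ω n)) ∂Pr x
      ≤ ∫⁻ ω in B, ENNReal.ofReal (δ n) * hitValue Pr δ f V (ω n) ∂Pr x :=
        setLIntegral_mono' (pathSigma_le_pi n B hB) fun ω hω => by
          rw [ENNReal.ofReal_mul (hδ n).1]
          exact mul_le_mul_right (hwait ω hω) _
    _ = ENNReal.ofReal (δ n) *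
          ∫⁻ ω in B, reward δ f (pathShift n ω) (hitTime V (pathShift n ω)) ∂Pr x := by
        rw [lintegral_const_mul (f := fun ω : ℕ → 𝕏 => hitValue Pr δ f V (ω n)) _
            ((measurable_hitValue hf hV).comp (measurable_pi_apply n)),
          hc.setLIntegral_comp_pathShift x hB hg]
        rfl
    _ = ∫⁻ ω in B, ENNReal.ofReal (δ n) *
          reward δ f (pathShift n ω) (hitTime V (pathShift n ω)) ∂Pr x :=
        (lintegral_const_mul _ (hg.comp (measurable_pathShift n))).symm
    _ ≤ _ := lintegral_mono fun ω => ofReal_mul_reward_pathShift_le hδ hf0 hDI n ω _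

end Reward

section Relay

variable {𝕏 : Type*} {S T A : Set 𝕏} {ω : ℕ → 𝕏}

open scoped Classical in
def nextTarget (S T : Set 𝕏) (y : 𝕏) : Set 𝕏 := if y ∈ S then T else S

lemma nextTarget_subset_union (y : 𝕏) : nextTarget S T y ⊆ S ∪ T := by
  unfold nextTarget; split_ifs
  exacts [subset_union_right, subset_union_left]

lemma subset_nextTarget (hAS : A ⊆ S) (hAT : A ⊆ T) (y : 𝕏) : A ⊆ nextTarget S T y := by
  unfold nextTarget; split_ifs
  exacts [hAT, hAS]

open scoped Classical in
def relayStep (S T A : Set 𝕏) (ω : ℕ → 𝕏) : ℕ∞ → ℕ∞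
  | ⊤ => ⊤
  | (n : ℕ) => if ω n ∈ A then n else n + hitTime (nextTarget S T (ω n)) (pathShift n ω)

def relayTime (S T A : Set 𝕏) (k : ℕ) (ω : ℕ → 𝕏) : ℕ∞ :=
  (relayStep S T A ω)^[k] (hitTime S ω)

@[simp] lemma relayStep_top : relayStep S T A ω ⊤ = ⊤ := rfl

lemma relayStep_of_mem {n : ℕ} (h : ω n ∈ A) : relayStep S T A ω n = n := if_pos h

lemma relayStep_of_notMem {n : ℕ} (h : ω n ∉ A) :
    relayStep S T A ω n = n + hitTime (nextTarget S T (ω n)) (pathShift n ω) := if_neg h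

lemma relayStep_eq_natCast_iff {m n : ℕ} :
    relayStep S T A ω m = n ↔ ω m ∈ A ∧ m = n ∨
      ω m ∉ A ∧ m ≤ n ∧ hitTime (nextTarget S T (ω m)) (pathShift m ω) = (n - m : ℕ) := by
  by_cases hm : ω m ∈ A
  · simp [relayStep_of_mem hm, hm]
  · rw [relayStep_of_notMem hm]
    induction hitTime (nextTarget S T (ω m)) (pathShift m ω) using ENat.recTopCoe with
    | top => simp only [hm, add_top, ENat.top_ne_natCast, and_false, or_false, false_and]
    | coe j =>
      simp only [hm, false_and, not_false_eq_true, true_and, false_or, ← Nat.cast_add,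
        Nat.cast_inj]
      omega

lemma le_relayStep (t : ℕ∞) : t ≤ relayStep S T A ω t := by
  induction t using ENat.recTopCoe with
  | top => rfl
  | coe n =>
    by_cases hn : ω n ∈ A
    · rw [relayStep_of_mem hn]
    · rw [relayStep_of_notMem hn]
      exact le_self_add

lemma lt_relayStep {n : ℕ} (hn : ω n ∉ A) : (n : ℕ∞) < relayStep S T A ω n := by
  rw [relayStep_of_notMem hn]
  calc (n : ℕ∞) < n + 1 := by exact_mod_cast n.lt_succ_self
    _ ≤ _ := add_le_add_right one_le_hitTime _

lemma relayTime_succ (k : ℕ) :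
    relayTime S T A (k + 1) ω = relayStep S T A ω (relayTime S T A k ω) :=
  Function.iterate_succ_apply' _ _ _

lemma monotone_relayTime : Monotone fun k => relayTime S T A k ω :=
  monotone_nat_of_le_succ fun k => (relayTime_succ k).symm ▸ le_relayStep _

lemma one_le_relayTime (k : ℕ) : 1 ≤ relayTime S T A k ω :=
  one_le_hitTime.trans (monotone_relayTime k.zero_le)

lemma relayTime_mem {k n : ℕ} (h : relayTime S T A k ω = n) : ω n ∈ S ∪ T := by
  induction k generalizing n with
  | zero => exact subset_union_left (mem_of_hitTime_eq h)
  | succ k ih =>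
    rw [relayTime_succ] at h
    induction hk : relayTime S T A k ω using ENat.recTopCoe with
    | top => simp [hk] at h
    | coe m =>
      rw [hk, relayStep_eq_natCast_iff] at h
      rcases h with ⟨-, rfl⟩ | ⟨-, hmn, hhit⟩
      · exact ih hk
      · have := mem_of_hitTime_eq hhit
        rw [pathShift_apply, Nat.add_sub_cancel' hmn] at this
        exact nextTarget_subset_union _ this

lemma relayTime_le_hitTime (hAS : A ⊆ S) (hAT : A ⊆ T) (k : ℕ) :
    relayTime S T A k ω ≤ hitTime A ω := by
  induction k with
  | zero => exact hitTime_le_hitTime hAS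
  | succ k ih =>
    rw [relayTime_succ]
    induction ha : hitTime A ω using ENat.recTopCoe with
    | top => exact le_top
    | coe a =>
      obtain ⟨m, hm⟩ := ENat.ne_top_iff_exists.1 (ne_top_of_le_ne_top (by simp [ha]) ih)
      rw [← hm] at ih ⊢
      rw [ha, Nat.cast_le] at ih
      by_cases hmA : ω m ∈ A
      · rw [relayStep_of_mem hmA]
        exact_mod_cast ih
      have haA := mem_of_hitTime_eq ha
      have hma : m < a := lt_of_le_of_ne ih fun h => hmA (h ▸ haA)
      rw [relayStep_of_notMem hmA]
      calc (m : ℕ∞) + hitTime (nextTarget S T (ω m)) (pathShift m ω) ≤ m + (a - m : ℕ) := by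
            refine add_le_add_right (hitTime_le (by omega) ?_) _
            rw [pathShift_apply, Nat.add_sub_cancel' ih]
            exact subset_nextTarget hAS hAT _ haA
        _ = a := by rw [← Nat.cast_add, Nat.add_sub_cancel' ih]

lemma tendsto_relayTime (hAS : A ⊆ S) (hAT : A ⊆ T) :
    Tendsto (fun k => relayTime S T A k ω) atTop (𝓝 (hitTime A ω)) := by
  by_cases hstop : ∃ (k n : ℕ), relayTime S T A k ω = n ∧ ω n ∈ A
  · obtain ⟨k, n, hk, hn⟩ := hstop
    have hconst : ∀ j, k ≤ j → relayTime S T A j ω = n := fun j hj => by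
      induction j, hj using Nat.le_induction with
      | base => exact hk
      | succ j _ ih => rw [relayTime_succ, ih, relayStep_of_mem hn]
    have hA : hitTime A ω = n :=
      le_antisymm (hitTime_le (Nat.one_le_cast.1 (hk ▸ one_le_relayTime k)) hn)
        (hk ▸ relayTime_le_hitTime hAS hAT k)
    rw [hA]
    exact tendsto_atTop_of_eventually_const hconst
  push Not at hstop
  have hgrow : ∀ k : ℕ, (k : ℕ∞) < relayTime S T A k ω := fun k => by
    induction k with
    | zero => exact (zero_lt_one' ℕ∞).trans_le one_le_hitTime
    | succ k ih =>
      rw [relayTime_succ]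
      induction hk : relayTime S T A k ω using ENat.recTopCoe with
      | top => simp
      | coe m =>
        rw [hk, Nat.cast_lt] at ih
        exact (Nat.cast_le.2 ih).trans_lt (lt_relayStep (hstop k m hk))
  have htop : hitTime A ω = ⊤ := ENat.eq_top_iff_forall_ge.2 fun k =>
    (hgrow k).le.trans (relayTime_le_hitTime hAS hAT k)
  rw [htop, ENat.tendsto_nhds_top_iff_natCast_lt]
  exact fun n => eventually_atTop.2 ⟨n, fun k hk => (Nat.cast_le.2 hk).trans_lt (hgrow k)⟩

end Relay

section RelayStoppingTime

variable {𝕏 : Type*} [MeasurableSpace 𝕏] {S T A : Set 𝕏}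

lemma measurableSet_relayStep_eq (hS : MeasurableSet S) (hT : MeasurableSet T)
    (hA : MeasurableSet A) {m n : ℕ} (hmn : m ≤ n) :
    MeasurableSet[pathSigma 𝕏 n] {ω | relayStep S T A ω m = n} := by
  have hhit : ∀ {V : Set 𝕏}, MeasurableSet V →
      MeasurableSet[pathSigma 𝕏 n] {ω | hitTime V (pathShift m ω) = (n - m : ℕ)} := fun hV => by
    have := measurableSet_hitTime_pathShift_eq hV m (n - m)
    rwa [Nat.add_sub_cancel' hmn] at this
  have hnext : {ω | hitTime (nextTarget S T (ω m)) (pathShift m ω) = (n - m : ℕ)} =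
      {ω | ω m ∈ S}.ite {ω | hitTime T (pathShift m ω) = (n - m : ℕ)}
        {ω | hitTime S (pathShift m ω) = (n - m : ℕ)} := by
    ext ω
    by_cases h : ω m ∈ S <;> simp [nextTarget, Set.ite, h]
  have hmA := measurableSet_pathSigma_apply_mem hmn hA
  simp only [relayStep_eq_natCast_iff, ofPred_or, ofPred_and, hnext]
  exact (hmA.inter (MeasurableSet.const _)).union (hmA.compl.inter ((MeasurableSet.const _).inter
    ((measurableSet_pathSigma_apply_mem hmn hS).ite (hhit hT) (hhit hS))))

lemma isPathStoppingTime_relayStep {τ : (ℕ → 𝕏) → ℕ∞} (hτ : IsPathStoppingTime τ)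
    (hS : MeasurableSet S) (hT : MeasurableSet T) (hA : MeasurableSet A) :
    IsPathStoppingTime fun ω => relayStep S T A ω (τ ω) := by
  intro n
  have : {ω | relayStep S T A ω (τ ω) = n} =
      ⋃ m ∈ Finset.range (n + 1), {ω | τ ω = m} ∩ {ω | relayStep S T A ω m = n} := by
    ext ω
    simp only [mem_ofPred_eq, mem_iUnion, mem_inter_iff, Finset.mem_range, exists_prop]
    constructor
    · intro h
      obtain ⟨m, hm⟩ : ∃ m : ℕ, (m : ℕ∞) = τ ω :=
        ENat.ne_top_iff_exists.1 fun htop => by simp [htop] at h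
      refine ⟨m, ?_, hm.symm, hm ▸ h⟩
      have := hm ▸ h ▸ le_relayStep (S := S) (T := T) (A := A) (ω := ω) (τ ω)
      exact Nat.lt_succ_of_le (Nat.cast_le.1 this)
    · rintro ⟨m, -, hm, h⟩
      rwa [hm]
  rw [this]
  exact .biUnion (to_countable _) fun m hm =>
    (pathSigma_mono (Nat.lt_succ_iff.1 (Finset.mem_range.1 hm)) _ (hτ m)).inter
      (measurableSet_relayStep_eq hS hT hA (Nat.lt_succ_iff.1 (Finset.mem_range.1 hm)))

lemma isPathStoppingTime_relayTime (hS : MeasurableSet S) (hT : MeasurableSet T)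
    (hA : MeasurableSet A) (k : ℕ) : IsPathStoppingTime (relayTime S T A k) := by
  induction k with
  | zero => exact isPathStoppingTime_hitTime hS
  | succ k ih =>
    have : relayTime S T A (k + 1) = fun ω => relayStep S T A ω (relayTime S T A k ω) :=
      funext fun _ => relayTime_succ k
    exact this ▸ isPathStoppingTime_relayStep ih hS hT hA

end RelayStoppingTime

section RelayValue

variable {𝕏 : Type*} [MeasurableSpace 𝕏] {Pr : Kernel 𝕏 (ℕ → 𝕏)} [IsMarkovKernel Pr]
  {Q : Kernel 𝕏 𝕏} {δ : ℕ → ℝ} {f : 𝕏 → ℝ} {S T A : Set 𝕏}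

lemma setLIntegral_reward_le_relayStep (hc : IsMarkovChainLaw Pr Q)
    (hδ : ∀ k, δ k ∈ Icc (0 : ℝ) 1) (hDI : ∀ i j : ℕ, δ i * δ j ≤ δ (i + j))
    (hf : Measurable f) (hf0 : ∀ x, 0 ≤ f x) (hS : MeasurableSet S) (hT : MeasurableSet T)
    (hA : MeasurableSet A) {n : ℕ} {E : Set (ℕ → 𝕏)} (hE : MeasurableSet[pathSigma 𝕏 n] E)
    (hwait : ∀ ω ∈ E, ω n ∉ A →
      ENNReal.ofReal (f (ω n)) ≤ hitValue Pr δ f (nextTarget S T (ω n)) (ω n)) (x : 𝕏) :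
    ∫⁻ ω in E, ENNReal.ofReal (δ n * f (ω n)) ∂Pr x ≤
      ∫⁻ ω in E, reward δ f ω (relayStep S T A ω n) ∂Pr x := by
  set EA := {ω : ℕ → 𝕏 | ω n ∈ A}
  set ES := {ω : ℕ → 𝕏 | ω n ∈ S}
  have hEA : MeasurableSet[pathSigma 𝕏 n] EA := measurableSet_pathSigma_apply_mem le_rfl hA
  have hES : MeasurableSet[pathSigma 𝕏 n] ES := measurableSet_pathSigma_apply_mem le_rfl hS
  have hsplit : ∀ g : (ℕ → 𝕏) → ℝ≥0∞, ∫⁻ ω in E, g ω ∂Pr x = ∫⁻ ω in E ∩ EA, g ω ∂Pr x +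
      (∫⁻ ω in (E \ EA) ∩ ES, g ω ∂Pr x + ∫⁻ ω in (E \ EA) \ ES, g ω ∂Pr x) := fun g => by
    rw [lintegral_inter_add_sdiff _ _ (pathSigma_le_pi n _ hES),
      lintegral_inter_add_sdiff _ _ (pathSigma_le_pi n _ hEA)]
  have hmeas : ∀ {B}, MeasurableSet[pathSigma 𝕏 n] B → MeasurableSet B := pathSigma_le_pi n _
  rw [hsplit, hsplit]
  -- on `E ∩ EA` the relay stops at `n`; otherwise it waits for `T` from `S`, for `S` elsewhere
  refine add_le_add (le_of_eq (setLIntegral_congr_fun (hmeas (hE.inter hEA)) fun ω hω => ?_))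
    (add_le_add ?_ ?_)
  · rw [relayStep_of_mem hω.2, reward_natCast]
  · refine (setLIntegral_reward_le_wait hc hδ hDI hf hf0 hT ((hE.diff hEA).inter hES)
      (fun ω hω => ?_) x).trans_eq (setLIntegral_congr_fun (hmeas ((hE.diff hEA).inter hES))
        fun ω hω => ?_)
    · simpa [nextTarget, show ω n ∈ S from hω.2] using hwait ω hω.1.1 hω.1.2
    · rw [relayStep_of_notMem hω.1.2, nextTarget, if_pos (show ω n ∈ S from hω.2)]
  · refine (setLIntegral_reward_le_wait hc hδ hDI hf hf0 hS ((hE.diff hEA).diff hES)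
      (fun ω hω => ?_) x).trans_eq (setLIntegral_congr_fun (hmeas ((hE.diff hEA).diff hES))
        fun ω hω => ?_)
    · simpa [nextTarget, show ω n ∉ S from hω.2] using hwait ω hω.1.1 hω.1.2
    · rw [relayStep_of_notMem hω.1.2, nextTarget, if_neg (show ω n ∉ S from hω.2)]

lemma lintegral_reward_le_relayStep (hc : IsMarkovChainLaw Pr Q)
    (hδ : ∀ k, δ k ∈ Icc (0 : ℝ) 1) (hDI : ∀ i j : ℕ, δ i * δ j ≤ δ (i + j))
    (hf : Measurable f) (hf0 : ∀ x, 0 ≤ f x) (hS : MeasurableSet S) (hT : MeasurableSet T)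
    (hA : MeasurableSet A) {τ : (ℕ → 𝕏) → ℕ∞} (hτ : IsPathStoppingTime τ)
    (hwait : ∀ ω (n : ℕ), τ ω = n → ω n ∉ A →
      ENNReal.ofReal (f (ω n)) ≤ hitValue Pr δ f (nextTarget S T (ω n)) (ω n)) (x : 𝕏) :
    ∫⁻ ω, reward δ f ω (τ ω) ∂Pr x ≤ ∫⁻ ω, reward δ f ω (relayStep S T A ω (τ ω)) ∂Pr x := by
  have hsupp : Function.support (fun ω => reward δ f ω (τ ω)) ⊆ {ω | τ ω ≠ ⊤} :=
    fun ω hω htop => hω (by simp [htop])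
  calc ∫⁻ ω, reward δ f ω (τ ω) ∂Pr x
      = ∑' n : ℕ, ∫⁻ ω in {ω | τ ω = n}, reward δ f ω (τ ω) ∂Pr x := by
        rw [tsum_setLIntegral_eq_setLIntegral_ne_top hτ.measurableSet_eq,
          setLIntegral_eq_of_support_subset hsupp]
    _ ≤ ∑' n : ℕ, ∫⁻ ω in {ω | τ ω = n}, reward δ f ω (relayStep S T A ω (τ ω)) ∂Pr x :=
        ENNReal.tsum_le_tsum fun n => by
          have hn := hτ.measurableSet_eq n
          calc ∫⁻ ω in {ω | τ ω = n}, reward δ f ω (τ ω) ∂Pr x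
              = ∫⁻ ω in {ω | τ ω = n}, ENNReal.ofReal (δ n * f (ω n)) ∂Pr x :=
                setLIntegral_congr_fun hn fun ω (hω : τ ω = n) => by rw [hω, reward_natCast]
            _ ≤ ∫⁻ ω in {ω | τ ω = n}, reward δ f ω (relayStep S T A ω n) ∂Pr x :=
                setLIntegral_reward_le_relayStep hc hδ hDI hf hf0 hS hT hA (hτ n)
                  (fun ω hω => hwait ω n hω) x
            _ = _ := setLIntegral_congr_fun hn fun ω (hω : τ ω = n) => by rw [hω]
    _ ≤ ∫⁻ ω, reward δ f ω (relayStep S T A ω (τ ω)) ∂Pr x := by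
        rw [tsum_setLIntegral_eq_setLIntegral_ne_top hτ.measurableSet_eq]
        exact setLIntegral_le_lintegral _ _

theorem hitValue_le_hitValue_of_relay (hc : IsMarkovChainLaw Pr Q) {C : ℝ}
    (hδ : ∀ k, δ k ∈ Icc (0 : ℝ) 1) (hδ_lim : Tendsto δ atTop (𝓝 0))
    (hDI : ∀ i j : ℕ, δ i * δ j ≤ δ (i + j)) (hf : Measurable f) (hf0 : ∀ x, 0 ≤ f x)
    (hfC : ∀ x, f x ≤ C) (hS : MeasurableSet S) (hT : MeasurableSet T) (hA : MeasurableSet A)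
    (hAS : A ⊆ S) (hAT : A ⊆ T)
    (hwaitS : ∀ y ∈ S \ A, ENNReal.ofReal (f y) ≤ hitValue Pr δ f T y)
    (hwaitT : ∀ y ∈ T \ S, ENNReal.ofReal (f y) ≤ hitValue Pr δ f S y) (x : 𝕏) :
    hitValue Pr δ f S x ≤ hitValue Pr δ f A x := by
  have hτ := isPathStoppingTime_relayTime hS hT hA
  have hwait : ∀ k ω (n : ℕ), relayTime S T A k ω = n → ω n ∉ A →
      ENNReal.ofReal (f (ω n)) ≤ hitValue Pr δ f (nextTarget S T (ω n)) (ω n) := by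
    intro k ω n hn hnA
    by_cases hnS : ω n ∈ S
    · simpa [nextTarget, hnS] using hwaitS _ ⟨hnS, hnA⟩
    · simpa [nextTarget, hnS] using hwaitT _ ⟨(relayTime_mem hn).resolve_left hnS, hnS⟩
  have hmono : Monotone fun k => ∫⁻ ω, reward δ f ω (relayTime S T A k ω) ∂Pr x :=
    monotone_nat_of_le_succ fun k => by
      simp only [relayTime_succ]
      exact lintegral_reward_le_relayStep hc hδ hDI hf hf0 hS hT hA (hτ k) (hwait k) x
  exact hmono.ge_of_tendsto (tendsto_lintegral_reward hδ hδ_lim hf hf0 hfC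
    (fun k => (hτ k).measurable) fun _ => tendsto_relayTime hAS hAT) 0

end RelayValue

section Equilibrium

variable {𝕏 : Type*} [MeasurableSpace 𝕏] {Pr : Kernel 𝕏 (ℕ → 𝕏)} {δ : ℕ → ℝ} {f : 𝕏 → ℝ}
  {V V' : Set 𝕏}

lemma valJ_eq_toReal_hitValue (hδ : ∀ k, δ k ∈ Icc (0 : ℝ) 1) (hf : Measurable f)
    (hf0 : ∀ x, 0 ≤ f x) (hV : MeasurableSet V) (x : 𝕏) :
    valJ Pr δ f V x = (hitValue Pr δ f V x).toReal := by
  have hpay : ∀ ω, stopPayoff δ f V ω = (reward δ f ω (hitTime V ω)).toReal := fun ω => by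
    induction h : hitTime V ω using ENat.recTopCoe with
    | top => simp [stopPayoff, h]
    | coe t => simp [stopPayoff, h, mul_nonneg (hδ t).1 (hf0 _)]
  simp only [valJ, hpay]
  exact integral_toReal
    (measurable_reward_comp hf (isPathStoppingTime_hitTime hV).measurable).aemeasurable
    (ae_of_all _ fun ω => (reward_ne_top ω _).lt_top)

variable [IsFiniteKernel Pr] {C : ℝ}

lemma mem_Θ_iff (hδ : ∀ k, δ k ∈ Icc (0 : ℝ) 1) (hf : Measurable f) (hf0 : ∀ x, 0 ≤ f x)
    (hfC : ∀ x, f x ≤ C) (hV : MeasurableSet V) {x : 𝕏} :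
    x ∈ Θ Pr δ f V ↔ hitValue Pr δ f V x ≤ ENNReal.ofReal (f x) := by
  rw [Θ, mem_ofPred_eq, valJ_eq_toReal_hitValue hδ hf hf0 hV,
    ENNReal.le_ofReal_iff_toReal_le (hitValue_ne_top hδ hf0 hfC x) (hf0 x)]

lemma measurableSet_Θ (hδ : ∀ k, δ k ∈ Icc (0 : ℝ) 1) (hf : Measurable f) (hf0 : ∀ x, 0 ≤ f x)
    (hfC : ∀ x, f x ≤ C) (hV : MeasurableSet V) : MeasurableSet (Θ Pr δ f V) := by
  have : Θ Pr δ f V = {x | hitValue Pr δ f V x ≤ ENNReal.ofReal (f x)} :=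
    ext fun _ => mem_Θ_iff hδ hf hf0 hfC hV
  exact this ▸ measurableSet_le (measurable_hitValue hf hV) hf.ennreal_ofReal

lemma Θ_subset_Θ_of_hitValue_le (hδ : ∀ k, δ k ∈ Icc (0 : ℝ) 1) (hf : Measurable f)
    (hf0 : ∀ x, 0 ≤ f x) (hfC : ∀ x, f x ≤ C) (hV : MeasurableSet V) (hV' : MeasurableSet V')
    (h : ∀ x, hitValue Pr δ f V x ≤ hitValue Pr δ f V' x) : Θ Pr δ f V' ⊆ Θ Pr δ f V :=
  fun x hx => (mem_Θ_iff hδ hf hf0 hfC hV).2 ((h x).trans ((mem_Θ_iff hδ hf hf0 hfC hV').1 hx))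

lemma ofReal_le_hitValue_of_notMem_Θ (hδ : ∀ k, δ k ∈ Icc (0 : ℝ) 1) (hf : Measurable f)
    (hf0 : ∀ x, 0 ≤ f x) (hfC : ∀ x, f x ≤ C) (hV : MeasurableSet V) {x : 𝕏}
    (hx : x ∉ Θ Pr δ f V) : ENNReal.ofReal (f x) ≤ hitValue Pr δ f V x :=
  (not_le.1 (mt (mem_Θ_iff hδ hf hf0 hfC hV).2 hx)).le

lemma valV_le_valV (hδ : ∀ k, δ k ∈ Icc (0 : ℝ) 1) (hf : Measurable f) (hf0 : ∀ x, 0 ≤ f x)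
    (hfC : ∀ x, f x ≤ C) (hV : MeasurableSet V) (hV' : MeasurableSet V') {x : 𝕏}
    (h : hitValue Pr δ f V x ≤ hitValue Pr δ f V' x) : valV Pr δ f V x ≤ valV Pr δ f V' x := by
  simp only [valV, valJ_eq_toReal_hitValue hδ hf hf0 hV, valJ_eq_toReal_hitValue hδ hf hf0 hV']
  exact max_le_max le_rfl (ENNReal.toReal_mono (hitValue_ne_top hδ hf0 hfC x) h)

end Equilibrium

section Iteration

variable {𝕏 : Type*} [MeasurableSpace 𝕏] {Pr : Kernel 𝕏 (ℕ → 𝕏)} [IsMarkovKernel Pr]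
  {Q : Kernel 𝕏 𝕏} {δ : ℕ → ℝ} {f : 𝕏 → ℝ} {C : ℝ} {R S T : Set 𝕏}

lemma hitValue_le_hitValue_Θ (hc : IsMarkovChainLaw Pr Q) (hδ : ∀ k, δ k ∈ Icc (0 : ℝ) 1)
    (hδ_lim : Tendsto δ atTop (𝓝 0)) (hDI : ∀ i j : ℕ, δ i * δ j ≤ δ (i + j))
    (hf : Measurable f) (hf0 : ∀ x, 0 ≤ f x) (hfC : ∀ x, f x ≤ C) (hR : MeasurableSet R)
    (hΘR : Θ Pr δ f R ⊆ R) (x : 𝕏) : hitValue Pr δ f R x ≤ hitValue Pr δ f (Θ Pr δ f R) x :=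
  hitValue_le_hitValue_of_relay hc hδ hδ_lim hDI hf hf0 hfC hR hR
    (measurableSet_Θ hδ hf hf0 hfC hR) hΘR hΘR
    (fun _ hy => ofReal_le_hitValue_of_notMem_Θ hδ hf hf0 hfC hR hy.2)
    (fun _ hy => absurd hy.1 hy.2) x

lemma Θ_Θ_subset (hc : IsMarkovChainLaw Pr Q) (hδ : ∀ k, δ k ∈ Icc (0 : ℝ) 1)
    (hδ_lim : Tendsto δ atTop (𝓝 0)) (hDI : ∀ i j : ℕ, δ i * δ j ≤ δ (i + j))
    (hf : Measurable f) (hf0 : ∀ x, 0 ≤ f x) (hfC : ∀ x, f x ≤ C) (hR : MeasurableSet R)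
    (hΘR : Θ Pr δ f R ⊆ R) : Θ Pr δ f (Θ Pr δ f R) ⊆ Θ Pr δ f R :=
  Θ_subset_Θ_of_hitValue_le hδ hf hf0 hfC hR (measurableSet_Θ hδ hf hf0 hfC hR)
    (hitValue_le_hitValue_Θ hc hδ hδ_lim hDI hf hf0 hfC hR hΘR)

lemma hitValue_le_hitValue_inter (hc : IsMarkovChainLaw Pr Q) (hδ : ∀ k, δ k ∈ Icc (0 : ℝ) 1)
    (hδ_lim : Tendsto δ atTop (𝓝 0)) (hDI : ∀ i j : ℕ, δ i * δ j ≤ δ (i + j))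
    (hf : Measurable f) (hf0 : ∀ x, 0 ≤ f x) (hfC : ∀ x, f x ≤ C)
    (hS : IsEquilibrium Pr δ f S) (hT : IsEquilibrium Pr δ f T) (x : 𝕏) :
    hitValue Pr δ f S x ≤ hitValue Pr δ f (S ∩ T) x :=
  hitValue_le_hitValue_of_relay hc hδ hδ_lim hDI hf hf0 hfC hS.1 hT.1 (hS.1.inter hT.1)
    inter_subset_left inter_subset_right
    (fun _ hy => ofReal_le_hitValue_of_notMem_Θ hδ hf hf0 hfC hT.1
      (hT.2.symm ▸ fun hyT => hy.2 ⟨hy.1, hyT⟩))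
    (fun _ hy => ofReal_le_hitValue_of_notMem_Θ hδ hf hf0 hfC hS.1 (hS.2.symm ▸ hy.2)) x

lemma Θ_inter_subset_inter (hc : IsMarkovChainLaw Pr Q) (hδ : ∀ k, δ k ∈ Icc (0 : ℝ) 1)
    (hδ_lim : Tendsto δ atTop (𝓝 0)) (hDI : ∀ i j : ℕ, δ i * δ j ≤ δ (i + j))
    (hf : Measurable f) (hf0 : ∀ x, 0 ≤ f x) (hfC : ∀ x, f x ≤ C)
    (hS : IsEquilibrium Pr δ f S) (hT : IsEquilibrium Pr δ f T) :
    Θ Pr δ f (S ∩ T) ⊆ S ∩ T := by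
  have hST := hS.1.inter hT.1
  refine fun x hx => ⟨?_, ?_⟩
  · rw [← hS.2]
    exact Θ_subset_Θ_of_hitValue_le hδ hf hf0 hfC hS.1 hST
      (hitValue_le_hitValue_inter hc hδ hδ_lim hDI hf hf0 hfC hS hT) hx
  · rw [← hT.2]
    refine Θ_subset_Θ_of_hitValue_le hδ hf hf0 hfC hT.1 hST (fun y => ?_) hx
    rw [inter_comm]
    exact hitValue_le_hitValue_inter hc hδ hδ_lim hDI hf hf0 hfC hT hS y

theorem isEquilibrium_iInter_iterate_Θ (hc : IsMarkovChainLaw Pr Q)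
    (hδ : ∀ k, δ k ∈ Icc (0 : ℝ) 1) (hδ_lim : Tendsto δ atTop (𝓝 0))
    (hDI : ∀ i j : ℕ, δ i * δ j ≤ δ (i + j)) (hf : Measurable f) (hf0 : ∀ x, 0 ≤ f x)
    (hfC : ∀ x, f x ≤ C) (hR : MeasurableSet R) (hΘR : Θ Pr δ f R ⊆ R) :
    IsEquilibrium Pr δ f (⋂ n, (Θ Pr δ f)^[n] R) ∧
      ∀ x, hitValue Pr δ f R x ≤ hitValue Pr δ f (⋂ n, (Θ Pr δ f)^[n] R) x := by
  have hstep : ∀ n, MeasurableSet ((Θ Pr δ f)^[n] R) ∧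
      Θ Pr δ f ((Θ Pr δ f)^[n] R) ⊆ (Θ Pr δ f)^[n] R := by
    intro n
    induction n with
    | zero => exact ⟨hR, hΘR⟩
    | succ n ih =>
      rw [Function.iterate_succ_apply']
      exact ⟨measurableSet_Θ hδ hf hf0 hfC ih.1, Θ_Θ_subset hc hδ hδ_lim hDI hf hf0 hfC ih.1 ih.2⟩
  have hmeas := fun n => (hstep n).1
  have hanti : Antitone fun n => (Θ Pr δ f)^[n] R := antitone_nat_of_succ_le fun n => by
    rw [Function.iterate_succ_apply']
    exact (hstep n).2
  have hlim := tendsto_hitValue_iInter (Pr := Pr) hδ hδ_lim hf hf0 hfC hmeas hanti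
  have hle : ∀ n x, hitValue Pr δ f ((Θ Pr δ f)^[n] R) x ≤
      hitValue Pr δ f (⋂ n, (Θ Pr δ f)^[n] R) x := fun n x =>
    Monotone.ge_of_tendsto (monotone_nat_of_le_succ fun n => by
      rw [Function.iterate_succ_apply']
      exact hitValue_le_hitValue_Θ hc hδ hδ_lim hDI hf hf0 hfC (hmeas n) (hstep n).2 x) (hlim x) n
  refine ⟨⟨.iInter hmeas, subset_antisymm (fun x hx => mem_iInter.2 fun n => hanti n.le_succ ?_)
    fun x hx => ?_⟩, hle 0⟩
  · show x ∈ (Θ Pr δ f)^[n + 1] R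
    rw [Function.iterate_succ_apply']
    exact Θ_subset_Θ_of_hitValue_le hδ hf hf0 hfC (hmeas n) (.iInter hmeas) (hle n) hx
  · rw [mem_Θ_iff hδ hf hf0 hfC (.iInter hmeas)]
    refine le_of_tendsto' (hlim x) fun n => (mem_Θ_iff hδ hf hf0 hfC (hmeas n)).1 ?_
    have := mem_iInter.1 hx (n + 1)
    rwa [Function.iterate_succ_apply'] at this

end Iteration

theorem intersection_limit_equilibrium_general
    {𝕏 : Type*} [MeasurableSpace 𝕏]
    (Pr : Kernel 𝕏 (ℕ → 𝕏)) [IsMarkovKernel Pr] (Q : Kernel 𝕏 𝕏)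
    (hchain : IsMarkovChainLaw Pr Q)
    (f : 𝕏 → ℝ) (hf_meas : Measurable f) (hf_nonneg : ∀ x, 0 ≤ f x)
    (hf_bdd : ∃ C : ℝ, ∀ x, f x ≤ C)
    (δ : ℕ → ℝ) (hδ_mem : ∀ k, δ k ∈ Set.Icc (0 : ℝ) 1)
    (hδ_lim : Tendsto δ atTop (𝓝 0))
    (hDI : ∀ i j : ℕ, δ i * δ j ≤ δ (i + j))
    (S T : Set 𝕏) (hS : IsEquilibrium Pr δ f S) (hT : IsEquilibrium Pr δ f T) :
    IsEquilibrium Pr δ f (⋂ n : ℕ, (Θ Pr δ f)^[n + 1] (S ∩ T)) ∧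
    ∀ x : 𝕏, max (valV Pr δ f S x) (valV Pr δ f T x) ≤
      valV Pr δ f (⋂ n : ℕ, (Θ Pr δ f)^[n + 1] (S ∩ T)) x := by
  obtain ⟨C, hfC⟩ := hf_bdd
  have hST := hS.1.inter hT.1
  have hΘST := Θ_inter_subset_inter hchain hδ_mem hδ_lim hDI hf_meas hf_nonneg hfC hS hT
  obtain ⟨hlimit, hlimit_ge⟩ := isEquilibrium_iInter_iterate_Θ hchain hδ_mem hδ_lim hDI hf_meas
    hf_nonneg hfC (measurableSet_Θ hδ_mem hf_meas hf_nonneg hfC hST)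
    (Θ_Θ_subset hchain hδ_mem hδ_lim hDI hf_meas hf_nonneg hfC hST hΘST)
  simp only [Function.iterate_succ_apply]
  have hdom : ∀ {V}, MeasurableSet V → (∀ x, hitValue Pr δ f V x ≤ hitValue Pr δ f (S ∩ T) x) →
      ∀ x, valV Pr δ f V x ≤ valV Pr δ f (⋂ n, (Θ Pr δ f)^[n] (Θ Pr δ f (S ∩ T))) x :=
    fun hV hVle x => valV_le_valV hδ_mem hf_meas hf_nonneg hfC hV hlimit.1 ((hVle x).trans
      ((hitValue_le_hitValue_Θ hchain hδ_mem hδ_lim hDI hf_meas hf_nonneg hfC hST hΘST x).trans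
        (hlimit_ge x)))
  refine ⟨hlimit, fun x => max_le (hdom hS.1 (fun y => ?_) x) (hdom hT.1 (fun y => ?_) x)⟩
  · exact hitValue_le_hitValue_inter hchain hδ_mem hδ_lim hDI hf_meas hf_nonneg hfC hS hT y
  · exact inter_comm T S ▸
      hitValue_le_hitValue_inter hchain hδ_mem hδ_lim hDI hf_meas hf_nonneg hfC hT hS y

/-- Under decreasing impatience, for any two equilibria `S, T`, the set
`(S∩T)_∞ = ⋂_{n ≥ 1} Θⁿ(S∩T)` is an equilibrium and dominates both `S` and `T` in value. -/
theorem intersection_limit_equilibrium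
    {𝕏 : Type*} [TopologicalSpace 𝕏] [PolishSpace 𝕏] [MeasurableSpace 𝕏] [BorelSpace 𝕏]
    (Pr : Kernel 𝕏 (ℕ → 𝕏)) [IsMarkovKernel Pr] (Q : Kernel 𝕏 𝕏) [IsMarkovKernel Q]
    (hchain : IsMarkovChainLaw Pr Q)
    (f : 𝕏 → ℝ) (hf_meas : Measurable f) (hf_nonneg : ∀ x, 0 ≤ f x)
    (hf_bdd : ∃ C : ℝ, ∀ x, f x ≤ C)
    (δ : ℕ → ℝ) (hδ_mem : ∀ k, δ k ∈ Set.Icc (0 : ℝ) 1) (hδ_anti : StrictAnti δ)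
    (hδ_zero : δ 0 = 1) (hδ_lim : Tendsto δ atTop (𝓝 0))
    (hDI : ∀ i j : ℕ, δ i * δ j ≤ δ (i + j))
    (S T : Set 𝕏) (hS : IsEquilibrium Pr δ f S) (hT : IsEquilibrium Pr δ f T) :
    IsEquilibrium Pr δ f (⋂ n : ℕ, (Θ Pr δ f)^[n + 1] (S ∩ T)) ∧
    ∀ x : 𝕏, max (valV Pr δ f S x) (valV Pr δ f T x) ≤
      valV Pr δ f (⋂ n : ℕ, (Θ Pr δ f)^[n + 1] (S ∩ T)) x :=
  intersection_limit_equilibrium_general Pr Q hchain f hf_meas hf_nonneg hf_bdd δ hδ_mem hδ_lim hDI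
    S T hS hT
end
end

section
/- Let 𝕏 be a Polish space equipped with a Borel reference measure μ, and let q : 𝕏 × 𝕏 → [0,∞) be Borel measurable with ∫_𝕏 q(x,y) μ(dy) = 1 for every x ∈ 𝕏, defining a Markov kernel Q(x,dy) = q(x,y) μ(dy). If for each y ∈ 𝕏 the map x ↦ q(x,y) is lower semicontinuous, then Q is continuous under the weak star topology: for every bounded Borel measurable g : 𝕏 → ℝ and every sequence x_n → x in 𝕏, lim_{n→∞} ∫_𝕏 g(y) q(x_n,y) μ(dy) = ∫_𝕏 g(y) q(x,y) μ(dy). -/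
open MeasureTheory ProbabilityTheory Set Filter Topology
open scoped ENNReal ENat

noncomputable section

/-- If the transition kernel `Q(x, dy) = q(x,y) μ(dy)` has densities `q(·,y)` that are
lower semicontinuous in the first variable, then `Q` is continuous under the weak star
topology: `∫ g dQ(x_n) → ∫ g dQ(x)` whenever `x_n → x`, for every bounded Borel `g`. -/
theorem kernel_density_lsc_implies_weak_star_continuous
    {𝕏 : Type*} [TopologicalSpace 𝕏] [PolishSpace 𝕏] [MeasurableSpace 𝕏] [BorelSpace 𝕏]
    (μ : Measure 𝕏) [SigmaFinite μ]
    (q : 𝕏 → 𝕏 → ℝ) (hq_meas : Measurable (Function.uncurry q))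
    (hq_nonneg : ∀ x y, 0 ≤ q x y) (hq_int : ∀ x, ∫ y, q x y ∂μ = 1)
    (hq_lsc : ∀ y, LowerSemicontinuous fun x => q x y) :
    ∀ g : 𝕏 → ℝ, Measurable g → (∃ C : ℝ, ∀ y, |g y| ≤ C) →
      ∀ (x : 𝕏) (xs : ℕ → 𝕏), Tendsto xs atTop (𝓝 x) →
        Tendsto (fun n => ∫ y, g y * q (xs n) y ∂μ) atTop (𝓝 (∫ y, g y * q x y ∂μ)) := by
  rintro g hg ⟨C, hC⟩ x xs hxs
  have hqm : ∀ z : 𝕏, Measurable (q z) := fun z => hq_meas.of_uncurry_left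
  have hint : ∀ z : 𝕏, Integrable (q z) μ := fun z =>
    integrable_of_integral_eq_one (hq_int z)
  have hC0 : 0 ≤ C := le_trans (abs_nonneg _) (hC x)
  -- pointwise convergence of the negative part
  have hpt : ∀ y, Tendsto (fun n => max (q x y - q (xs n) y) 0) atTop (𝓝 0) := by
    intro y
    rw [Metric.tendsto_atTop]
    intro ε hε
    have hlsc := (hq_lsc y) x (q x y - ε) (by linarith)
    have h2 := hxs.eventually hlsc
    rw [eventually_atTop] at h2
    obtain ⟨N, hN⟩ := h2
    refine ⟨N, fun n hn => ?_⟩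
    have h3 := hN n hn
    rw [Real.dist_eq, sub_zero, abs_of_nonneg (le_max_right _ _), max_lt_iff]
    exact ⟨by linarith, hε⟩
  -- measurability of the negative parts
  have hFm : ∀ z : 𝕏, Measurable (fun y => max (q x y - q z y) 0) := fun z =>
    ((hqm x).sub (hqm z)).max measurable_const
  -- integrability of the negative parts (dominated by q x)
  have hFint : ∀ z : 𝕏, Integrable (fun y => max (q x y - q z y) 0) μ := by
    intro z
    refine (hint x).mono' (hFm z).aestronglyMeasurable ?_
    filter_upwards with y
    rw [Real.norm_eq_abs, abs_of_nonneg (le_max_right _ _)]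
    exact max_le (by have := hq_nonneg z y; have := hq_nonneg x y; linarith)
      (hq_nonneg x y)
  -- dominated convergence
  have hdom : Tendsto (fun n => ∫ y, max (q x y - q (xs n) y) 0 ∂μ) atTop (𝓝 0) := by
    have := MeasureTheory.tendsto_integral_of_dominated_convergence
      (fun y => q x y) (fun n => (hFm (xs n)).aestronglyMeasurable) (hint x)
      (fun n => by
        filter_upwards with y
        rw [Real.norm_eq_abs, abs_of_nonneg (le_max_right _ _)]
        exact max_le (by have := hq_nonneg (xs n) y; linarith) (hq_nonneg x y))
      (by filter_upwards with y using hpt y)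
    simpa using this
  -- L¹ convergence
  have hL1 : ∀ n, ∫ y, |q (xs n) y - q x y| ∂μ
      = 2 * ∫ y, max (q x y - q (xs n) y) 0 ∂μ := by
    intro n
    have heq : ∀ y, |q (xs n) y - q x y|
        = (q (xs n) y - q x y) + 2 * max (q x y - q (xs n) y) 0 := by
      intro y
      rcases le_total (q x y) (q (xs n) y) with h | h
      · rw [abs_of_nonneg (by linarith), max_eq_right (by linarith)]; ring
      · rw [abs_of_nonpos (by linarith), max_eq_left (by linarith)]; ring
    have hsub : Integrable (fun y => q (xs n) y - q x y) μ :=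
      (hint (xs n)).sub (hint x)
    have hmul : Integrable (fun y => 2 * max (q x y - q (xs n) y) 0) μ :=
      (hFint (xs n)).const_mul 2
    rw [integral_congr_ae (Filter.Eventually.of_forall heq),
      integral_add hsub hmul, integral_sub (hint (xs n)) (hint x),
      hq_int, hq_int, integral_const_mul]
    ring
  -- integrability of g * q z
  have hgint : ∀ z : 𝕏, Integrable (fun y => g y * q z y) μ := by
    intro z
    refine ((hint z).const_mul C).mono' (hg.mul (hqm z)).aestronglyMeasurable ?_
    filter_upwards with y
    rw [Real.norm_eq_abs, abs_mul, abs_of_nonneg (hq_nonneg z y)]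
    exact mul_le_mul_of_nonneg_right (hC y) (hq_nonneg z y)
  -- conclusion via squeeze
  rw [tendsto_iff_dist_tendsto_zero]
  have hbound : ∀ n, dist (∫ y, g y * q (xs n) y ∂μ) (∫ y, g y * q x y ∂μ)
      ≤ C * (2 * ∫ y, max (q x y - q (xs n) y) 0 ∂μ) := by
    intro n
    rw [Real.dist_eq, ← integral_sub (hgint (xs n)) (hgint x)]
    calc |∫ y, (g y * q (xs n) y - g y * q x y) ∂μ|
        ≤ ∫ y, |g y * q (xs n) y - g y * q x y| ∂μ :=
          by simpa [Real.norm_eq_abs] using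
            norm_integral_le_integral_norm (fun y => g y * q (xs n) y - g y * q x y)
      _ ≤ ∫ y, C * |q (xs n) y - q x y| ∂μ := by
          refine integral_mono_of_nonneg
            (Filter.Eventually.of_forall fun y => abs_nonneg _)
            ((((hint (xs n)).sub (hint x)).abs).const_mul C) ?_
          filter_upwards with y
          rw [← mul_sub, abs_mul]
          exact mul_le_mul_of_nonneg_right (hC y) (abs_nonneg _)
      _ = C * ∫ y, |q (xs n) y - q x y| ∂μ := integral_const_mul _ _
      _ = C * (2 * ∫ y, max (q x y - q (xs n) y) 0 ∂μ) := by rw [hL1 n]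
  have hsq : Tendsto (fun n => C * (2 * ∫ y, max (q x y - q (xs n) y) 0 ∂μ))
      atTop (𝓝 0) := by
    have := (hdom.const_mul 2).const_mul C
    simpa using this
  exact squeeze_zero (fun n => dist_nonneg) hbound hsq

end
end
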